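/- arXiv:1101.1928 — 3 statements merged into one kernel-verified Lean document; each statement's English description precedes it below -/
import Mathlib

section
/- If k = 2m with m odd (i.e., k is even but not divisible by 4), then there do not exist three pairwise orthogonal vectors in ℝ^k all of whose entries equal ±1. -/
open Finset

lemma key_prod (k m : ℕ) (hk : k = 2 * m) (f : Fin k → ℝ)
    (hf : ∀ i, f i = 1 ∨ f i = -1) (hs : ∑ i, f i = 0) :
    ∏ i, f i = (-1) ^ m := by
  classical
  set N : Finset (Fin k) := univ.filter (fun i => f i = -1) with hN
  have hsum : ∑ i, f i = (k : ℝ) - 2 * N.card := by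
    rw [← Finset.sum_filter_add_sum_filter_not univ (fun i => f i = -1)]
    have h1 : ∑ i ∈ univ.filter (fun i => f i = -1), f i = -(N.card : ℝ) := by
      rw [Finset.sum_congr rfl (fun i hi => (Finset.mem_filter.mp hi).2)]
      simp [hN]
    have h2 : ∑ i ∈ univ.filter (fun i => ¬ f i = -1), f i
        = ((univ.filter (fun i => ¬ f i = -1)).card : ℝ) := by
      rw [Finset.sum_congr rfl (fun i hi => ((hf i).resolve_right (Finset.mem_filter.mp hi).2))]
      simp
    rw [h1, h2]
    have hcard : (univ.filter (fun i => ¬ f i = -1)).card = k - N.card := by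
      rw [hN, Finset.filter_not, Finset.card_sdiff_of_subset (Finset.filter_subset _ _)]
      simp
    rw [hcard]
    have hle : N.card ≤ k := by
      simpa using Finset.card_le_card (Finset.filter_subset _ (univ : Finset (Fin k)))
    push_cast [hle]
    ring
  have hcardN : N.card = m := by
    rw [hs] at hsum
    have : (k : ℝ) = 2 * N.card := by linarith
    have : (k : ℕ) = 2 * N.card := by exact_mod_cast this
    omega
  have hprod : ∏ i, f i = (-1 : ℝ) ^ N.card := by
    rw [← Finset.prod_filter_mul_prod_filter_not univ (fun i => f i = -1)]
    have h1 : ∏ i ∈ univ.filter (fun i => f i = -1), f i = (-1 : ℝ) ^ N.card := by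
      rw [Finset.prod_congr rfl (fun i hi => (Finset.mem_filter.mp hi).2)]
      simp [hN]
    have h2 : ∏ i ∈ univ.filter (fun i => ¬ f i = -1), f i = 1 := by
      rw [Finset.prod_congr rfl (fun i hi => ((hf i).resolve_right (Finset.mem_filter.mp hi).2))]
      simp
    rw [h1, h2, mul_one]
  rw [hprod, hcardN]

/-- If `k = 2m` with `m` odd, there do not exist three pairwise orthogonal
`±1`-vectors in `ℝ^k`. -/
theorem stmt_2 (k m : ℕ) (hk : k = 2 * m) (hm : Odd m) :
    ¬ ∃ u v w : Fin k → ℝ,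
      (∀ i, u i = 1 ∨ u i = -1) ∧ (∀ i, v i = 1 ∨ v i = -1) ∧
      (∀ i, w i = 1 ∨ w i = -1) ∧
      ∑ i, u i * v i = 0 ∧ ∑ i, u i * w i = 0 ∧ ∑ i, v i * w i = 0 := by
  rintro ⟨u, v, w, hu, hv, hw, huv, huw, hvw⟩
  have pm : ∀ (a b : Fin k → ℝ), (∀ i, a i = 1 ∨ a i = -1) → (∀ i, b i = 1 ∨ b i = -1) →
      ∀ i, a i * b i = 1 ∨ a i * b i = -1 := by
    intro a b ha hb i
    rcases ha i with h1 | h1 <;> rcases hb i with h2 | h2 <;> simp [h1, h2]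
  have p1 := key_prod k m hk (fun i => u i * v i) (pm u v hu hv) huv
  have p2 := key_prod k m hk (fun i => u i * w i) (pm u w hu hw) huw
  have p3 := key_prod k m hk (fun i => v i * w i) (pm v w hv hw) hvw
  have hone : (∏ i, u i * v i) * (∏ i, u i * w i) * (∏ i, v i * w i) = 1 := by
    rw [← Finset.prod_mul_distrib, ← Finset.prod_mul_distrib]
    apply Finset.prod_eq_one
    intro i _
    rcases hu i with h1 | h1 <;> rcases hv i with h2 | h2 <;> rcases hw i with h3 | h3 <;>
      simp [h1, h2, h3]
  rw [p1, p2, p3, hm.neg_one_pow] at hone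
  norm_num at hone
end

section
/- If n+1 is odd, then the maximum number of mutually orthogonal vectors in ℝ^{2n+1} each lying in W = span(Z₁,…,Zₙ) or in the set {X₀ + ε₁X₁ + ⋯ + εₙXₙ : εᵢ ∈ {±1}} (up to nonzero scalar) is exactly n+1. -/
/-!
Vectors of the second kind are nonzero multiples of `∑ εᵢ Xᵢ`, and two of them have dot product
`c d ∑ εᵢ δᵢ`, a sum of an odd number of signs, hence nonzero: at most one of them can occur.
The remaining ones are nonzero and pairwise orthogonal in `span Z`, hence linearly independent,
so there are at most `n` of them. Conversely `Z₁, …, Zₙ, X₀ + ⋯ + Xₙ` are `n + 1` such vectors.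
-/

open Finset Matrix

theorem linearIndependent_of_pairwise_dotProduct_eq_zero {K ι m : Type*} [Field K] [LinearOrder K]
    [IsStrictOrderedRing K] [Fintype m] {v : ι → m → K} (hv₀ : ∀ l, v l ≠ 0)
    (hv : Pairwise fun l l' => v l ⬝ᵥ v l' = 0) : LinearIndependent K v :=
  LinearMap.BilinForm.linearIndependent_of_iIsOrtho (B := dotProductBilin K K) hv
    fun l => dotProduct_self_eq_zero.not.mpr (hv₀ l)

theorem sum_smul_dotProduct_sum_smul_of_orthonormal {R ι m : Type*} [CommRing R] [Fintype ι]
    [DecidableEq ι] [Fintype m] {X : ι → m → R}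
    (hX : ∀ i j, X i ⬝ᵥ X j = if i = j then 1 else 0) (a b : ι → R) :
    (∑ i, a i • X i) ⬝ᵥ (∑ j, b j • X j) = ∑ i, a i * b i := by
  simp [sum_dotProduct, dotProduct_sum, hX, mul_comm]

theorem sum_sign_ne_zero_of_odd_card {ι R : Type*} [Fintype ι] [Ring R] [CharZero R]
    (hodd : Odd (Fintype.card ι)) {ε : ι → R} (hε : ∀ i, ε i = 1 ∨ ε i = -1) :
    ∑ i, ε i ≠ 0 := by
  classical
  intro hsum
  have hneg : ∀ i ∈ univ.filter (fun i => ¬ ε i = 1), ε i = -1 := fun i hi =>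
    (hε i).resolve_left (mem_filter.mp hi).2
  rw [← sum_filter_add_sum_filter_not univ (fun i => ε i = 1),
    sum_congr rfl fun i hi => (mem_filter.mp hi).2, sum_congr rfl hneg] at hsum
  have hcard := card_filter_add_card_filter_not (s := univ) (fun i => ε i = 1)
  simp only [sum_const, nsmul_eq_mul, mul_one, mul_neg, add_neg_eq_zero, Nat.cast_inj] at hsum
  rw [card_univ, hsum] at hcard
  exact Nat.not_even_iff_odd.mpr hodd ⟨_, hcard.symm⟩

section SignVectors

variable {ι m : Type*} [Fintype ι] [DecidableEq ι] [Fintype m] {X : ι → m → ℝ}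

theorem smul_sum_sign_dotProduct_ne_zero (hX : ∀ i j, X i ⬝ᵥ X j = if i = j then 1 else 0)
    (hodd : Odd (Fintype.card ι)) {c d : ℝ} (hc : c ≠ 0) (hd : d ≠ 0) {ε δ : ι → ℝ}
    (hε : ∀ i, ε i = 1 ∨ ε i = -1) (hδ : ∀ i, δ i = 1 ∨ δ i = -1) :
    (c • ∑ i, ε i • X i) ⬝ᵥ (d • ∑ i, δ i • X i) ≠ 0 := by
  have hεδ : ∀ i, ε i * δ i = 1 ∨ ε i * δ i = -1 := fun i => by
    rcases hε i with h | h <;> rcases hδ i with h' | h' <;> simp [h, h']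
  rw [smul_dotProduct, dotProduct_smul, sum_smul_dotProduct_sum_smul_of_orthonormal hX]
  simp only [smul_eq_mul]
  exact mul_ne_zero hc (mul_ne_zero hd (sum_sign_ne_zero_of_odd_card hodd hεδ))

theorem card_le_card_add_one_of_pairwise_dotProduct_eq_zero {κ μ : Type*} [Fintype κ] [Fintype μ]
    (hX : ∀ i j, X i ⬝ᵥ X j = if i = j then 1 else 0) (hodd : Odd (Fintype.card ι))
    (Z : κ → m → ℝ) {v : μ → m → ℝ} (hv₀ : ∀ l, v l ≠ 0)
    (hv : ∀ l, v l ∈ Submodule.span ℝ (Set.range Z) ∨ ∃ (c : ℝ) (ε : ι → ℝ), c ≠ 0 ∧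
      (∀ i, ε i = 1 ∨ ε i = -1) ∧ v l = c • ∑ i, ε i • X i)
    (horth : Pairwise fun l l' => v l ⬝ᵥ v l' = 0) :
    Fintype.card μ ≤ Fintype.card κ + 1 := by
  classical
  set S := univ.filter fun l => v l ∈ Submodule.span ℝ (Set.range Z)
  have hS : #S ≤ Fintype.card κ := by
    have hli := (linearIndependent_of_pairwise_dotProduct_eq_zero hv₀ horth).comp
      (Subtype.val : S → μ) Subtype.val_injective
    calc #S = Module.finrank ℝ (Submodule.span ℝ (Set.range (v ∘ Subtype.val : S → m → ℝ))) := by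
          rw [finrank_span_eq_card hli, Fintype.card_coe]
      _ ≤ Module.finrank ℝ (Submodule.span ℝ (Set.range Z)) := by
          refine Submodule.finrank_mono (Submodule.span_le.mpr ?_)
          rintro _ ⟨l, rfl⟩
          exact (mem_filter.mp l.2).2
      _ ≤ Fintype.card κ := finrank_range_le_card Z
  have hSc : #(univ.filter fun l => v l ∉ Submodule.span ℝ (Set.range Z)) ≤ 1 := by
    refine card_le_one.mpr fun l hl l' hl' => by_contra fun hne => ?_
    obtain ⟨c, ε, hc, hε, hvl⟩ := (hv l).resolve_left (mem_filter.mp hl).2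
    obtain ⟨d, δ, hd, hδ, hvl'⟩ := (hv l').resolve_left (mem_filter.mp hl').2
    have horth_ll' : v l ⬝ᵥ v l' = 0 := horth hne
    rw [hvl, hvl'] at horth_ll'
    exact smul_sum_sign_dotProduct_ne_zero hX hodd hc hd hε hδ horth_ll'
  have hsplit : #S + #(univ.filter fun l => v l ∉ Submodule.span ℝ (Set.range Z)) =
      Fintype.card μ := by
    rw [card_filter_add_card_filter_not, card_univ]
  omega

end SignVectors

section Snoc

variable {ι m : Type*} [Fintype ι] [Fintype m] {X : ι → m → ℝ} {n : ℕ} {Z : Fin n → m → ℝ}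

theorem snoc_sum_dotProduct_self_ne_zero [DecidableEq ι] [Nonempty ι]
    (hX : ∀ i j, X i ⬝ᵥ X j = if i = j then 1 else 0)
    (hZ : ∀ j k, Z j ⬝ᵥ Z k = if j = k then 1 else 0) (l : Fin (n + 1)) :
    Fin.snoc (α := fun _ => m → ℝ) Z (∑ i, X i) l ⬝ᵥ
      Fin.snoc (α := fun _ => m → ℝ) Z (∑ i, X i) l ≠ 0 := by
  induction l using Fin.lastCases with
  | last => simp [sum_dotProduct, dotProduct_sum, hX]
  | cast j => simp [hZ]

theorem snoc_sum_dotProduct_eq_zero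
    (hZ : ∀ j k, Z j ⬝ᵥ Z k = if j = k then 1 else 0) (hZX : ∀ j i, Z j ⬝ᵥ X i = 0)
    {l l' : Fin (n + 1)} (hne : l ≠ l') :
    Fin.snoc (α := fun _ => m → ℝ) Z (∑ i, X i) l ⬝ᵥ
      Fin.snoc (α := fun _ => m → ℝ) Z (∑ i, X i) l' = 0 := by
  induction l using Fin.lastCases with
  | last =>
    induction l' using Fin.lastCases with
    | last => exact absurd rfl hne
    | cast k => simp [dotProduct_comm _ (Z k), dotProduct_sum, hZX]
  | cast j =>
    induction l' using Fin.lastCases with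
    | last => simp [dotProduct_sum, hZX]
    | cast k => simpa [hZ] using hne

end Snoc

/-- If `n+1` is odd, the maximum number of mutually orthogonal nonzero vectors in
`ℝ^{2n+1}` each lying in `W = span(Z₁,…,Zₙ)` or being a nonzero scalar multiple of
some `X₀ + ε₁X₁ + ⋯ + εₙXₙ` (`εᵢ = ±1`) is exactly `n+1`. -/
theorem stmt_14 (n : ℕ) (hodd : Odd (n + 1))
    (X : Fin (n + 1) → (Fin (2 * n + 1) → ℝ))
    (Z : Fin n → (Fin (2 * n + 1) → ℝ))
    (hON : ∀ a b : Fin (n + 1) ⊕ Fin n,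
      ∑ i, Sum.elim X Z a i * Sum.elim X Z b i = if a = b then 1 else 0) :
    (∃ v : Fin (n + 1) → (Fin (2 * n + 1) → ℝ),
      (∀ l, v l ≠ 0 ∧
        ((∃ c : Fin n → ℝ, v l = ∑ j, c j • Z j) ∨
          (∃ (c : ℝ) (ε : Fin (n + 1) → ℝ), c ≠ 0 ∧ ε 0 = 1 ∧
            (∀ i, ε i = 1 ∨ ε i = -1) ∧ v l = c • ∑ i, ε i • X i))) ∧
      ∀ l m, l ≠ m → ∑ i, v l i * v m i = 0) ∧
    ¬ (∃ v : Fin (n + 2) → (Fin (2 * n + 1) → ℝ),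
      (∀ l, v l ≠ 0 ∧
        ((∃ c : Fin n → ℝ, v l = ∑ j, c j • Z j) ∨
          (∃ (c : ℝ) (ε : Fin (n + 1) → ℝ), c ≠ 0 ∧ ε 0 = 1 ∧
            (∀ i, ε i = 1 ∨ ε i = -1) ∧ v l = c • ∑ i, ε i • X i))) ∧
      ∀ l m, l ≠ m → ∑ i, v l i * v m i = 0) := by
  have hX : ∀ i j, X i ⬝ᵥ X j = if i = j then 1 else 0 := fun i j => by
    simpa [dotProduct] using hON (.inl i) (.inl j)
  have hZ : ∀ j k, Z j ⬝ᵥ Z k = if j = k then 1 else 0 := fun j k => by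
    simpa [dotProduct] using hON (.inr j) (.inr k)
  have hZX : ∀ j i, Z j ⬝ᵥ X i = 0 := fun j i => by
    simpa [dotProduct] using hON (.inr j) (.inl i)
  refine ⟨⟨Fin.snoc Z (∑ i, X i), fun l => ⟨?_, ?_⟩,
    fun l l' hne => snoc_sum_dotProduct_eq_zero hZ hZX hne⟩, ?_⟩
  · exact fun h => snoc_sum_dotProduct_self_ne_zero hX hZ l (by rw [h, zero_dotProduct])
  · induction l using Fin.lastCases with
    | last => exact .inr ⟨1, fun _ => 1, one_ne_zero, rfl, fun _ => .inl rfl, by simp⟩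
    | cast j => exact .inl ⟨Pi.single j 1, by simp [Pi.single_apply]⟩
  · rintro ⟨v, hv, horth⟩
    have hcard := card_le_card_add_one_of_pairwise_dotProduct_eq_zero hX
      (by rwa [Fintype.card_fin]) Z (fun l => (hv l).1)
      (fun l => (hv l).2.imp
        (fun ⟨c, hc⟩ => (Submodule.mem_span_range_iff_exists_fun ℝ).mpr ⟨c, hc.symm⟩)
        fun ⟨c, ε, hc, _, hε, hvl⟩ => ⟨c, ε, hc, hε, hvl⟩) horth
    simp at hcard
end

section
/- If n+1 ≡ 2 (mod 4), then the maximum number of mutually orthogonal nonzero geodesic vectors (vectors in span(Z₁,…,Zₙ) or scalar multiples of X₀ + ε₁X₁ + ⋯ + εₙXₙ, εᵢ = ±1) in ℝ^{2n+1} is exactly n+2. -/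
open Finset


lemma aux_sign_orth {m : ℕ} (ε ε' ε'' : Fin m → ℝ)
    (h1 : ∀ i, ε i = 1 ∨ ε i = -1) (h2 : ∀ i, ε' i = 1 ∨ ε' i = -1)
    (h3 : ∀ i, ε'' i = 1 ∨ ε'' i = -1)
    (o12 : ∑ i, ε i * ε' i = 0) (o13 : ∑ i, ε i * ε'' i = 0)
    (o23 : ∑ i, ε' i * ε'' i = 0) : m % 4 = 0 := by
  classical
  have key : ∀ i, (ε i + ε' i) * (ε i + ε'' i)
      = if (ε' i = ε i ∧ ε'' i = ε i) then (4:ℝ) else 0 := by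
    intro i
    rcases h1 i with a | a <;> rcases h2 i with b | b <;> rcases h3 i with c | c <;>
      simp [a, b, c] <;> norm_num
  have hsum : ∑ i, (ε i + ε' i) * (ε i + ε'' i) = (m : ℝ) := by
    have e1 : ∑ i, ε i * ε i = (m : ℝ) := by
      have : ∀ i, ε i * ε i = 1 := by
        intro i; rcases h1 i with a | a <;> simp [a]
      simp [this]
    calc ∑ i, (ε i + ε' i) * (ε i + ε'' i)
        = ∑ i, (ε i * ε i + ε i * ε'' i + ε i * ε' i + ε' i * ε'' i) := by
          apply Finset.sum_congr rfl; intros; ring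
      _ = (m : ℝ) := by
          rw [Finset.sum_add_distrib, Finset.sum_add_distrib, Finset.sum_add_distrib,
            e1, o12, o13, o23]; ring
  rw [Finset.sum_congr rfl (fun i _ => key i)] at hsum
  rw [Finset.sum_ite, Finset.sum_const, Finset.sum_const_zero] at hsum
  set k := (Finset.univ.filter (fun i => ε' i = ε i ∧ ε'' i = ε i)).card with hk
  have : (m : ℝ) = ((4 * k : ℕ) : ℝ) := by
    rw [← hsum]; push_cast; ring
  have hm : m = 4 * k := Nat.cast_injective this
  omega

lemma aux_card_le {n : ℕ} {ι : Type} [Fintype ι] (w : ι → (Fin n → ℝ))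
    (hw : ∀ l, w l ≠ 0) (horth : ∀ l m, l ≠ m → ∑ j, w l j * w m j = 0) :
    Fintype.card ι ≤ n := by
  classical
  have hli : LinearIndependent ℝ w := by
    rw [Fintype.linearIndependent_iff]
    intro g hg m
    have h0 : ∑ j, (∑ i, g i • w i) j * w m j = 0 := by rw [hg]; simp
    have hswap : ∑ j, (∑ i, g i • w i) j * w m j
        = ∑ i, g i * ∑ j, w i j * w m j := by
      simp only [Finset.sum_apply, Pi.smul_apply, smul_eq_mul, Finset.sum_mul,
        Finset.mul_sum]
      rw [Finset.sum_comm]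
      apply Finset.sum_congr rfl; intros; apply Finset.sum_congr rfl; intros; ring
    rw [hswap] at h0
    have hsingle : ∑ i, g i * ∑ j, w i j * w m j = g m * ∑ j, w m j * w m j := by
      rw [Finset.sum_eq_single m]
      · intro i _ hi; rw [horth i m hi]; ring
      · simp
    rw [hsingle] at h0
    have hpos : 0 < ∑ j, w m j * w m j := by
      have h1 : ∃ j, w m j ≠ 0 := by
        by_contra h; push_neg at h; exact hw m (funext h)
      obtain ⟨j, hj⟩ := h1
      have hjj : (0:ℝ) < w m j * w m j := mul_self_pos.mpr hj
      calc (0:ℝ) < w m j * w m j := hjj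
        _ ≤ ∑ j', w m j' * w m j' :=
          Finset.single_le_sum (fun j' _ => mul_self_nonneg (w m j')) (Finset.mem_univ j)
    rcases mul_eq_zero.mp h0 with h | h
    · exact h
    · exact absurd h (ne_of_gt hpos)
  have := hli.fintype_card_le_finrank
  simpa using this

lemma aux_repr_dot {n : ℕ} (X : Fin (n + 1) → (Fin (2 * n + 1) → ℝ))
    (Z : Fin n → (Fin (2 * n + 1) → ℝ))
    (hON : ∀ a b : Fin (n + 1) ⊕ Fin n,
      ∑ i, Sum.elim X Z a i * Sum.elim X Z b i = if a = b then 1 else 0)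
    {v w : Fin (2 * n + 1) → ℝ} {f g : (Fin (n + 1) ⊕ Fin n) → ℝ}
    (hv : ∀ i, v i = ∑ s, f s * Sum.elim X Z s i)
    (hw : ∀ i, w i = ∑ s, g s * Sum.elim X Z s i) :
    ∑ i, v i * w i = ∑ s, f s * g s := by
  classical
  have expand : ∀ i, v i * w i
      = ∑ a, ∑ b, f a * g b * (Sum.elim X Z a i * Sum.elim X Z b i) := by
    intro i
    rw [hv, hw, Finset.sum_mul_sum]
    apply Finset.sum_congr rfl; intro a _
    apply Finset.sum_congr rfl; intro b _; ring
  have step1 : ∑ i, v i * w i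
      = ∑ a, ∑ b, f a * g b * ∑ i, Sum.elim X Z a i * Sum.elim X Z b i := by
    rw [Finset.sum_congr rfl (fun i _ => expand i), Finset.sum_comm]
    apply Finset.sum_congr rfl; intro a _
    rw [Finset.sum_comm]
    apply Finset.sum_congr rfl; intro b _
    rw [Finset.mul_sum]
  rw [step1]
  apply Finset.sum_congr rfl; intro a _
  rw [Finset.sum_eq_single a]
  · rw [hON a a]; simp
  · intro b _ hb; rw [hON a b, if_neg (Ne.symm hb)]; ring
  · simp

lemma aux_reprZ {n : ℕ} (X : Fin (n + 1) → (Fin (2 * n + 1) → ℝ))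
    (Z : Fin n → (Fin (2 * n + 1) → ℝ)) (c : Fin n → ℝ) (i : Fin (2 * n + 1)) :
    (∑ j, c j • Z j) i = ∑ s, Sum.elim (0 : Fin (n+1) → ℝ) c s * Sum.elim X Z s i := by
  simp [Fintype.sum_sum_type, Finset.sum_apply]

lemma aux_reprX {n : ℕ} (X : Fin (n + 1) → (Fin (2 * n + 1) → ℝ))
    (Z : Fin n → (Fin (2 * n + 1) → ℝ)) (c : ℝ) (ε : Fin (n+1) → ℝ) (i : Fin (2 * n + 1)) :
    (c • ∑ a, ε a • X a) i
      = ∑ s, Sum.elim (fun a => c * ε a) (0 : Fin n → ℝ) s * Sum.elim X Z s i := by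
  simp [Fintype.sum_sum_type, Finset.sum_apply, Finset.mul_sum, mul_assoc]

/-- If `n+1 ≡ 2 (mod 4)`, the maximum number of mutually orthogonal nonzero geodesic
vectors (vectors in `span(Z₁,…,Zₙ)` or nonzero multiples of `X₀ + ε₁X₁ + ⋯ + εₙXₙ`,
`εᵢ = ±1`) in `ℝ^{2n+1}` is exactly `n+2`. -/
theorem stmt_15 (n : ℕ) (hmod : (n + 1) % 4 = 2)
    (X : Fin (n + 1) → (Fin (2 * n + 1) → ℝ))
    (Z : Fin n → (Fin (2 * n + 1) → ℝ))
    (hON : ∀ a b : Fin (n + 1) ⊕ Fin n,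
      ∑ i, Sum.elim X Z a i * Sum.elim X Z b i = if a = b then 1 else 0) :
    (∃ v : Fin (n + 2) → (Fin (2 * n + 1) → ℝ),
      (∀ l, v l ≠ 0 ∧
        ((∃ c : Fin n → ℝ, v l = ∑ j, c j • Z j) ∨
          (∃ (c : ℝ) (ε : Fin (n + 1) → ℝ), c ≠ 0 ∧ ε 0 = 1 ∧
            (∀ i, ε i = 1 ∨ ε i = -1) ∧ v l = c • ∑ i, ε i • X i))) ∧
      ∀ l m, l ≠ m → ∑ i, v l i * v m i = 0) ∧
    ¬ (∃ v : Fin (n + 3) → (Fin (2 * n + 1) → ℝ),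
      (∀ l, v l ≠ 0 ∧
        ((∃ c : Fin n → ℝ, v l = ∑ j, c j • Z j) ∨
          (∃ (c : ℝ) (ε : Fin (n + 1) → ℝ), c ≠ 0 ∧ ε 0 = 1 ∧
            (∀ i, ε i = 1 ∨ ε i = -1) ∧ v l = c • ∑ i, ε i • X i))) ∧
      ∀ l m, l ≠ m → ∑ i, v l i * v m i = 0) := by
  classical
  -- basic facts
  have hdelta : ∀ j : Fin n, (∑ k, (if k = j then (1:ℝ) else 0) • Z k) = Z j := by
    intro j
    rw [Finset.sum_eq_single j]
    · simp
    · intro b _ hb; simp [hb]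
    · simp
  constructor
  · -- EXISTENCE
    set h := (n + 1) / 2 with hh
    have hh1 : 2 * h = n + 1 := by omega
    have hh2 : 0 < h := by omega
    set ε1 : Fin (n+1) → ℝ := fun _ => 1 with hε1
    set ε2 : Fin (n+1) → ℝ := fun i => if (i : ℕ) < h then 1 else -1 with hε2
    have hε2val : ∀ i, ε2 i = 1 ∨ ε2 i = -1 := by
      intro i; by_cases hi : (i : ℕ) < h <;> simp [hε2, hi]
    have hε20 : ε2 0 = 1 := by simp [hε2, hh2]
    have sum_eps2 : ∑ a : Fin (n+1), ε2 a = 0 := by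
      rw [Fin.sum_univ_eq_sum_range (fun k => if k < h then (1:ℝ) else -1)]
      rw [Finset.sum_ite, Finset.sum_const, Finset.sum_const]
      have hfil : (Finset.range (n+1)).filter (fun k => k < h) = Finset.range h := by
        ext k; simp only [Finset.mem_filter, Finset.mem_range]; omega
      have hcard2 : ((Finset.range (n+1)).filter (fun k => ¬ k < h)).card = n + 1 - h := by
        have := Finset.card_filter_add_card_filter_not
          (s := Finset.range (n+1)) (p := fun k => k < h)
        simp only [Finset.card_range] at this
        rw [hfil, Finset.card_range] at this
        omega
      rw [hfil, hcard2, Finset.card_range]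
      have : ((n + 1 - h : ℕ) : ℝ) = ((h : ℕ) : ℝ) := by
        congr 1; omega
      simp [this]
    set e1 : Fin (2*n+1) → ℝ := (1:ℝ) • ∑ a, ε1 a • X a with he1
    set e2 : Fin (2*n+1) → ℝ := (1:ℝ) • ∑ a, ε2 a • X a with he2
    -- representations
    have reprZ : ∀ j : Fin n, ∀ i, Z j i
        = ∑ s, Sum.elim (0 : Fin (n+1) → ℝ) (fun k => if k = j then (1:ℝ) else 0) s
            * Sum.elim X Z s i := by
      intro j i
      rw [← aux_reprZ X Z, hdelta]
    have repr1 : ∀ i, e1 i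
        = ∑ s, Sum.elim (fun a => 1 * ε1 a) (0 : Fin n → ℝ) s * Sum.elim X Z s i := by
      intro i; rw [he1]; exact aux_reprX X Z 1 ε1 i
    have repr2 : ∀ i, e2 i
        = ∑ s, Sum.elim (fun a => 1 * ε2 a) (0 : Fin n → ℝ) s * Sum.elim X Z s i := by
      intro i; rw [he2]; exact aux_reprX X Z 1 ε2 i
    -- dot products
    have dZZ : ∀ j k : Fin n, ∑ i, Z j i * Z k i = if j = k then (1:ℝ) else 0 := by
      intro j k
      have := hON (Sum.inr j) (Sum.inr k)
      simpa using this
    have dZe1 : ∀ j : Fin n, ∑ i, Z j i * e1 i = 0 := by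
      intro j
      rw [aux_repr_dot X Z hON (reprZ j) repr1]
      simp [Fintype.sum_sum_type]
    have dZe2 : ∀ j : Fin n, ∑ i, Z j i * e2 i = 0 := by
      intro j
      rw [aux_repr_dot X Z hON (reprZ j) repr2]
      simp [Fintype.sum_sum_type]
    have de1Z : ∀ j : Fin n, ∑ i, e1 i * Z j i = 0 := by
      intro j; rw [← dZe1 j]; apply Finset.sum_congr rfl; intros; ring
    have de2Z : ∀ j : Fin n, ∑ i, e2 i * Z j i = 0 := by
      intro j; rw [← dZe2 j]; apply Finset.sum_congr rfl; intros; ring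
    have de12 : ∑ i, e1 i * e2 i = 0 := by
      rw [aux_repr_dot X Z hON repr1 repr2]
      simp only [Fintype.sum_sum_type, Sum.elim_inl, Sum.elim_inr]
      simp [hε1, sum_eps2]
    have de21 : ∑ i, e2 i * e1 i = 0 := by
      rw [← de12]; apply Finset.sum_congr rfl; intros; ring
    -- nonzero
    have hZne : ∀ j : Fin n, Z j ≠ 0 := by
      intro j hz
      have := dZZ j j
      rw [hz] at this
      simp at this
    have he1ne : e1 ≠ 0 := by
      intro hz
      have := aux_repr_dot X Z hON repr1 repr1
      rw [hz] at this
      simp only [Pi.zero_apply, mul_zero, zero_mul, Finset.sum_const_zero] at this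
      have h2 : (0:ℝ) = ∑ a : Fin (n+1), (1:ℝ) := by
        rw [this]; simp [Fintype.sum_sum_type, hε1]
      simp only [Finset.sum_const, Finset.card_univ, Fintype.card_fin, nsmul_eq_mul,
        mul_one] at h2
      have hn : (0:ℝ) ≤ (n:ℝ) := Nat.cast_nonneg n
      push_cast at h2
      linarith
    have he2ne : e2 ≠ 0 := by
      intro hz
      have := aux_repr_dot X Z hON repr2 repr2
      rw [hz] at this
      simp only [Pi.zero_apply, mul_zero, zero_mul, Finset.sum_const_zero] at this
      have h2 : (0:ℝ) = ∑ a : Fin (n+1), (1:ℝ) := by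
        rw [this]
        simp only [Fintype.sum_sum_type, Sum.elim_inl, Sum.elim_inr, Pi.zero_apply,
          mul_zero, zero_mul, Finset.sum_const_zero, add_zero]
        apply Finset.sum_congr rfl; intro a _
        rcases hε2val a with ha | ha <;> rw [ha] <;> norm_num
      simp only [Finset.sum_const, Finset.card_univ, Fintype.card_fin, nsmul_eq_mul,
        mul_one] at h2
      have hn : (0:ℝ) ≤ (n:ℝ) := Nat.cast_nonneg n
      push_cast at h2
      linarith
    -- the family
    refine ⟨fun l => if hl : (l : ℕ) < n then Z ⟨l, hl⟩
      else if (l : ℕ) = n then e1 else e2, ?_, ?_⟩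
    · intro l
      dsimp only
      by_cases hl : (l : ℕ) < n
      · rw [dif_pos hl]
        exact ⟨hZne _, Or.inl ⟨fun k => if k = ⟨l, hl⟩ then 1 else 0, (hdelta _).symm⟩⟩
      · by_cases hl2 : (l : ℕ) = n
        · rw [dif_neg hl, if_pos hl2]
          exact ⟨he1ne, Or.inr ⟨1, ε1, one_ne_zero, rfl, fun i => Or.inl rfl, he1⟩⟩
        · rw [dif_neg hl, if_neg hl2]
          exact ⟨he2ne, Or.inr ⟨1, ε2, one_ne_zero, hε20, hε2val, he2⟩⟩
    · intro l m hlm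
      dsimp only
      have hne : (l : ℕ) ≠ (m : ℕ) := fun hc => hlm (Fin.ext hc)
      by_cases hl : (l : ℕ) < n <;> by_cases hm : (m : ℕ) < n
      · simp only [dif_pos hl, dif_pos hm]
        rw [dZZ, if_neg]
        intro hc
        exact hne (by simpa using hc)
      · by_cases hm2 : (m : ℕ) = n
        · simp only [dif_pos hl, dif_neg hm, if_pos hm2]
          exact dZe1 _
        · simp only [dif_pos hl, dif_neg hm, if_neg hm2]
          exact dZe2 _
      · by_cases hl2 : (l : ℕ) = n
        · simp only [dif_pos hm, dif_neg hl, if_pos hl2]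
          exact de1Z _
        · simp only [dif_pos hm, dif_neg hl, if_neg hl2]
          exact de2Z _
      · by_cases hl2 : (l : ℕ) = n <;> by_cases hm2 : (m : ℕ) = n
        · omega
        · simp only [dif_neg hl, dif_neg hm, if_pos hl2, if_neg hm2]
          exact de12
        · simp only [dif_neg hl, dif_neg hm, if_neg hl2, if_pos hm2]
          exact de21
        · exfalso
          have hl3 := l.isLt
          have hm3 := m.isLt
          omega
  · -- NONEXISTENCE
    rintro ⟨v, hforms, horth⟩
    set P : Fin (n+3) → Prop := fun l => ∃ c : Fin n → ℝ, v l = ∑ j, c j • Z j with hP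
    set A : Finset (Fin (n+3)) := Finset.univ.filter P with hA
    have hAcard : A.card ≤ n := by
      have spec : ∀ l : ↥A, ∃ c : Fin n → ℝ, v l = ∑ j, c j • Z j := by
        intro l
        exact (Finset.mem_filter.mp l.2).2
      set w : ↥A → (Fin n → ℝ) := fun l => Classical.choose (spec l) with hw
      have hwspec : ∀ l : ↥A, v l = ∑ j, w l j • Z j := fun l => Classical.choose_spec (spec l)
      have hrepr : ∀ l : ↥A, ∀ i, v l i
          = ∑ s, Sum.elim (0 : Fin (n+1) → ℝ) (w l) s * Sum.elim X Z s i := by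
        intro l i
        rw [hwspec l]
        exact aux_reprZ X Z (w l) i
      have hwne : ∀ l : ↥A, w l ≠ 0 := by
        intro l hz
        apply (hforms l).1
        rw [hwspec l, hz]
        simp
      have hwo : ∀ l m : ↥A, l ≠ m → ∑ j, w l j * w m j = 0 := by
        intro l m hlm
        have hlm' : (l : Fin (n+3)) ≠ (m : Fin (n+3)) := Subtype.coe_injective.ne hlm
        have := horth l m hlm'
        rw [aux_repr_dot X Z hON (hrepr l) (hrepr m)] at this
        rw [← this]
        simp [Fintype.sum_sum_type]
      have := aux_card_le w hwne hwo
      rwa [Fintype.card_coe] at this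
    have hBcard : Aᶜ.card ≤ 2 := by
      by_contra hc
      push_neg at hc
      obtain ⟨a, b, c, ha, hb, hcm, hab, hac, hbc⟩ := Finset.two_lt_card_iff.mp hc
      have getSign : ∀ l : Fin (n+3), l ∈ Aᶜ →
          ∃ (d : ℝ) (ε : Fin (n + 1) → ℝ), d ≠ 0 ∧
            (∀ i, ε i = 1 ∨ ε i = -1) ∧ v l = d • ∑ i, ε i • X i := by
        intro l hl
        have hnP : ¬ P l := by
          intro hPl
          rw [Finset.mem_compl, hA, Finset.mem_filter] at hl
          exact hl ⟨Finset.mem_univ l, hPl⟩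
        rcases (hforms l).2 with hform | ⟨d, ε, hd, _, hε, hform⟩
        · exact absurd hform hnP
        · exact ⟨d, ε, hd, hε, hform⟩
      obtain ⟨da, εa, hda, hεa, hva⟩ := getSign a ha
      obtain ⟨db, εb, hdb, hεb, hvb⟩ := getSign b hb
      obtain ⟨dc, εc, hdc, hεc, hvc⟩ := getSign c hcm
      have dotsign : ∀ (l m : Fin (n+3)) (dl dm : ℝ) (εl εm : Fin (n+1) → ℝ),
          l ≠ m → dl ≠ 0 → dm ≠ 0 →
          v l = dl • ∑ i, εl i • X i → v m = dm • ∑ i, εm i • X i →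
          ∑ i, εl i * εm i = 0 := by
        intro l m dl dm εl εm hlm hdl hdm hvl hvm
        have hrl : ∀ i, v l i
            = ∑ s, Sum.elim (fun a => dl * εl a) (0 : Fin n → ℝ) s * Sum.elim X Z s i := by
          intro i; rw [hvl]; exact aux_reprX X Z dl εl i
        have hrm : ∀ i, v m i
            = ∑ s, Sum.elim (fun a => dm * εm a) (0 : Fin n → ℝ) s * Sum.elim X Z s i := by
          intro i; rw [hvm]; exact aux_reprX X Z dm εm i
        have := horth l m hlm
        rw [aux_repr_dot X Z hON hrl hrm] at this
        simp only [Fintype.sum_sum_type, Sum.elim_inl, Sum.elim_inr, Pi.zero_apply,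
          mul_zero, zero_mul, Finset.sum_const_zero, add_zero] at this
        have h2 : dl * dm * ∑ i, εl i * εm i = 0 := by
          rw [← this, Finset.mul_sum]
          apply Finset.sum_congr rfl; intros; ring
        rcases mul_eq_zero.mp h2 with h | h
        · exact absurd h (mul_ne_zero hdl hdm)
        · exact h
      have o12 := dotsign a b da db εa εb hab hda hdb hva hvb
      have o13 := dotsign a c da dc εa εc hac hda hdc hva hvc
      have o23 := dotsign b c db dc εb εc hbc hdb hdc hvb hvc
      have := aux_sign_orth εa εb εc hεa hεb hεc o12 o13 o23
      omega
    have htot : A.card + Aᶜ.card = n + 3 := by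
      rw [Finset.card_add_card_compl]
      simp
    omega
end
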